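/- Let A be a finite dimensional G-graded division algebra over k such that char k does not divide |G|. Then the center Cen(A) of A is a symmetric k-algebra. -/

import Mathlib

open Module

/-- A left ideal of a `G`-graded algebra is graded if it is generated by its
homogeneous elements. -/
def IsGradedLeftIdeal {k A G : Type*} [Field k] [Ring A] [Algebra k A]
    (𝒜 : G → Submodule k A) (I : Submodule A A) : Prop :=
  I = Submodule.span A ((I : Set A) ∩ ⋃ g, (𝒜 g : Set A))

/-- A `G`-graded algebra is graded symmetric if it admits a symmetric linear functional
vanishing on all homogeneous components of degree ≠ e, whose kernel contains no
nonzero graded left ideal. -/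
def IsGradedSymmetric {k A G : Type*} [Field k] [Ring A] [Algebra k A] [Group G]
    (𝒜 : G → Submodule k A) : Prop :=
  ∃ lam : A →ₗ[k] k,
    (∀ a b : A, lam (a * b) = lam (b * a)) ∧
    (∀ g : G, g ≠ 1 → ∀ a ∈ 𝒜 g, lam a = 0) ∧
    ∀ I : Submodule A A, IsGradedLeftIdeal 𝒜 I → (∀ x ∈ I, lam x = 0) → I = ⊥

/-- A `G`-graded division algebra: a `G`-grading of `A` in which every nonzero
homogeneous element is invertible. -/
structure IsGradedDivisionAlgebra {k A G : Type*} [Field k] [Ring A] [Algebra k A]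
    [Group G] [DecidableEq G] (𝒜 : G → Submodule k A) : Prop where
  mul_mem : ∀ {g h : G} {a b : A}, a ∈ 𝒜 g → b ∈ 𝒜 h → a * b ∈ 𝒜 (g * h)
  one_mem : (1 : A) ∈ 𝒜 1
  internal : DirectSum.IsInternal 𝒜
  isUnit_of_ne_zero : ∀ g : G, ∀ a ∈ 𝒜 g, a ≠ 0 → IsUnit a

/-!
The functional is `z ↦ F (z₁)`, where `z₁` is the identity component of `z` and `F` is any
functional on `A` with `F 1 ≠ 0`. Given a nonzero central `z`, pick `g₀` with `z_{g₀} ≠ 0` and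
let `O` be the orbit of `g₀` under conjugation by the degrees of homogeneous units. Conjugating
the central element `z` by a homogeneous unit of degree `h` carries `z_g` to `z_{hgh⁻¹}`, so every
`z_g` with `g ∈ O` is nonzero, hence invertible, and `w = ∑_{g ∈ O} z_g⁻¹` commutes with every
homogeneous element, i.e. is central. The identity component of `w z` is `|O| • 1` and `|O|`
divides `|G|`, so `F ((w z)₁) = |O| F 1 ≠ 0`: no nonzero ideal lies in the kernel.
-/

namespace DirectSum

variable {R M ι : Type*} [Semiring R] [AddCommMonoid M] [Module R M] [DecidableEq ι]
  (𝒜 : ι → Submodule R M) [Decomposition 𝒜]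

noncomputable def homogProj (i : ι) : M →ₗ[R] M :=
  (𝒜 i).subtype ∘ₗ component R ι (fun i => 𝒜 i) i ∘ₗ (decomposeLinearEquiv 𝒜).toLinearMap

theorem homogProj_apply (i : ι) (a : M) : homogProj 𝒜 i a = (decompose 𝒜 a i : M) := rfl

theorem homogProj_mem (i : ι) (a : M) : homogProj 𝒜 i a ∈ 𝒜 i := (decompose 𝒜 a i).2

theorem homogProj_of_mem {i : ι} {a : M} (h : a ∈ 𝒜 i) : homogProj 𝒜 i a = a :=
  decompose_of_mem_same 𝒜 h

theorem homogProj_of_mem_of_ne {i j : ι} {a : M} (h : a ∈ 𝒜 j) (hne : j ≠ i) :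
    homogProj 𝒜 i a = 0 := by
  rw [homogProj_apply, decompose_of_mem_ne 𝒜 h hne]

theorem homogProj_sum_of_injective {κ : Type*} {s : Finset κ} {f : κ → M} {φ : κ → ι}
    (hφ : Function.Injective φ) (hf : ∀ j ∈ s, f j ∈ 𝒜 (φ j)) {i : κ} (hi : i ∈ s) :
    homogProj 𝒜 (φ i) (∑ j ∈ s, f j) = f i := by
  rw [map_sum, Finset.sum_eq_single_of_mem i hi, homogProj_of_mem 𝒜 (hf i hi)]
  exact fun j hj hji => homogProj_of_mem_of_ne 𝒜 (hf j hj) (hφ.ne hji)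

theorem sum_homogProj [Fintype ι] (a : M) : ∑ i, homogProj 𝒜 i a = a := by
  classical
  conv_rhs => rw [← sum_support_decompose 𝒜 a]
  refine (Finset.sum_subset (Finset.subset_univ _) fun i _ hi => ?_).symm
  rw [homogProj_apply, DFinsupp.notMem_support_iff.mp hi, ZeroMemClass.coe_zero]

end DirectSum

open scoped Ring

theorem DirectSum.mem_center_of_forall_homogeneous_commute {k A ι : Type*} [CommSemiring k]
    [Semiring A] [Algebra k A] [DecidableEq ι] (𝒜 : ι → Submodule k A) [Decomposition 𝒜]
    {w : A} (hw : ∀ i, ∀ a ∈ 𝒜 i, a * w = w * a) : w ∈ Subalgebra.center k A := by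
  refine Subalgebra.mem_center_iff.2 fun a => ?_
  have ha : a ∈ ⨆ i, 𝒜 i := by
    rw [(Decomposition.isInternal 𝒜).submodule_iSup_eq_top]; trivial
  refine Submodule.iSup_induction 𝒜 (motive := fun a => a * w = w * a) ha hw ?_ ?_
  · rw [zero_mul, mul_zero]
  · intro a b ha hb
    rw [add_mul, mul_add, ha, hb]

theorem Ring.inverse_units_conj {M₀ : Type*} [MonoidWithZero M₀] (u : M₀ˣ) (a : M₀) :
    (u * a * ↑u⁻¹ : M₀)⁻¹ʳ = u * a⁻¹ʳ * ↑u⁻¹ := by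
  by_cases ha : IsUnit a
  · obtain ⟨v, rfl⟩ := ha
    rw [← Units.val_mul, ← Units.val_mul, Ring.inverse_unit, Ring.inverse_unit]
    simp [mul_assoc]
  · have hconj : ¬IsUnit (u * a * ↑u⁻¹ : M₀) := by
      rwa [Units.isUnit_mul_units, Units.isUnit_units_mul]
    rw [Ring.inverse_non_unit _ ha, Ring.inverse_non_unit _ hconj, mul_zero, zero_mul]

section ConjOrbit

variable {G : Type*} [Group G]

def Subgroup.conjOrbit (H : Subgroup G) (g : G) : Set G :=
  MulAction.orbit (H.map (ConjAct.toConjAct : G ≃* ConjAct G).toMonoidHom) g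

theorem Subgroup.mem_conjOrbit_iff {H : Subgroup G} {g x : G} :
    x ∈ H.conjOrbit g ↔ ∃ h ∈ H, h * g * h⁻¹ = x := by
  constructor
  · rintro ⟨⟨_, h, hh, rfl⟩, rfl⟩
    exact ⟨h, hh, (ConjAct.toConjAct_smul h g).symm⟩
  · rintro ⟨h, hh, rfl⟩
    exact ⟨⟨_, h, hh, rfl⟩, ConjAct.toConjAct_smul h g⟩

theorem Subgroup.conj_mem_conjOrbit {H : Subgroup G} {g x h : G} (hh : h ∈ H)
    (hx : x ∈ H.conjOrbit g) : h * x * h⁻¹ ∈ H.conjOrbit g := by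
  obtain ⟨h', hh', rfl⟩ := mem_conjOrbit_iff.1 hx
  exact mem_conjOrbit_iff.2 ⟨h * h', H.mul_mem hh hh', by group⟩

theorem Subgroup.ncard_conjOrbit_dvd [Finite G] (H : Subgroup G) (g : G) :
    (H.conjOrbit g).ncard ∣ Nat.card G := by
  rw [conjOrbit, ← MulAction.index_stabilizer]
  exact (Subgroup.index_dvd_card _).trans (Subgroup.card_subgroup_dvd_card _)

end ConjOrbit

namespace IsGradedDivisionAlgebra

open DirectSum Ring

variable {k A G : Type*} [Field k] [Ring A] [Algebra k A] [Group G] [DecidableEq G]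
  {𝒜 : G → Submodule k A} (hA : IsGradedDivisionAlgebra 𝒜)
include hA

def unitDegrees : Subgroup G where
  carrier := {g | ∃ u : Aˣ, (u : A) ∈ 𝒜 g ∧ ((u⁻¹ : Aˣ) : A) ∈ 𝒜 g⁻¹}
  one_mem' := ⟨1, hA.one_mem, by simpa using hA.one_mem⟩
  mul_mem' := by
    rintro g h ⟨u, hu, hu'⟩ ⟨v, hv, hv'⟩
    refine ⟨u * v, hA.mul_mem hu hv, ?_⟩
    rw [mul_inv_rev, mul_inv_rev, Units.val_mul]
    exact hA.mul_mem hv' hu'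
  inv_mem' := by
    rintro g ⟨u, hu, hu'⟩
    exact ⟨u⁻¹, hu', by simpa using hu⟩

variable [Decomposition 𝒜] [Fintype G]

theorem units_inv_mem {g : G} {u : Aˣ} (hu : (u : A) ∈ 𝒜 g) : ((u⁻¹ : Aˣ) : A) ∈ 𝒜 g⁻¹ := by
  have hvanish : ∀ f ≠ g⁻¹, homogProj 𝒜 f ↑u⁻¹ = 0 := by
    intro f hf
    have hcomp : (u : A) * homogProj 𝒜 f ↑u⁻¹ = homogProj 𝒜 (g * f) 1 := by
      conv_rhs => rw [← u.mul_inv, ← sum_homogProj 𝒜 (↑u⁻¹ : A), Finset.mul_sum]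
      exact (homogProj_sum_of_injective 𝒜 (mul_right_injective g)
        (fun j _ => hA.mul_mem hu (homogProj_mem 𝒜 j _)) (Finset.mem_univ f)).symm
    rw [homogProj_of_mem_of_ne 𝒜 hA.one_mem
      (fun h => hf (eq_inv_of_mul_eq_one_right h.symm))] at hcomp
    exact u.mul_right_eq_zero.1 hcomp
  rw [← sum_homogProj 𝒜 (↑u⁻¹ : A),
    Finset.sum_eq_single_of_mem g⁻¹ (Finset.mem_univ _) fun f _ hf => hvanish f hf]
  exact homogProj_mem 𝒜 _ _

theorem inverse_mem {g : G} {a : A} (ha : a ∈ 𝒜 g) : a⁻¹ʳ ∈ 𝒜 g⁻¹ := by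
  by_cases h : IsUnit a
  · obtain ⟨u, rfl⟩ := h
    rw [inverse_unit]
    exact hA.units_inv_mem ha
  · rw [inverse_non_unit a h]
    exact zero_mem _

theorem homogProj_conj_of_mem_center {z : A} (hz : z ∈ Subalgebra.center k A) {h : G} {u : Aˣ}
    (hu : (u : A) ∈ 𝒜 h) (hu' : ((u⁻¹ : Aˣ) : A) ∈ 𝒜 h⁻¹) (g : G) :
    homogProj 𝒜 (h * g * h⁻¹) z = u * homogProj 𝒜 g z * ↑u⁻¹ := by
  have hconj : (u : A) * z * ↑u⁻¹ = z := by
    rw [Subalgebra.mem_center_iff.1 hz, Units.mul_inv_cancel_right]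
  conv_lhs => rw [← hconj, ← sum_homogProj 𝒜 z, Finset.mul_sum, Finset.sum_mul]
  exact homogProj_sum_of_injective 𝒜 (MulAut.conj h).injective
    (fun j _ => hA.mul_mem (hA.mul_mem hu (homogProj_mem 𝒜 j z)) hu') (Finset.mem_univ g)

theorem sum_inverse_homogProj_mem_center {z : A} (hz : z ∈ Subalgebra.center k A) (S : Finset G)
    (hS : ∀ h ∈ hA.unitDegrees, ∀ g ∈ S, h * g * h⁻¹ ∈ S) :
    ∑ g ∈ S, (homogProj 𝒜 g z)⁻¹ʳ ∈ Subalgebra.center k A := by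
  refine mem_center_of_forall_homogeneous_commute 𝒜 fun h a ha => ?_
  rcases eq_or_ne a 0 with rfl | ha0
  · rw [zero_mul, mul_zero]
  obtain ⟨u, rfl⟩ := hA.isUnit_of_ne_zero h a ha ha0
  have hu' := hA.units_inv_mem ha
  have hh : h ∈ hA.unitDegrees := ⟨u, ha, hu'⟩
  suffices (u : A) * (∑ g ∈ S, (homogProj 𝒜 g z)⁻¹ʳ) * ↑u⁻¹ = ∑ g ∈ S, (homogProj 𝒜 g z)⁻¹ʳ by
    conv_rhs => rw [← this]
    rw [Units.inv_mul_cancel_right]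
  rw [Finset.mul_sum, Finset.sum_mul]
  refine Finset.sum_equiv (MulAut.conj h).toEquiv (fun g => ⟨hS h hh g, fun hg => ?_⟩)
    fun g _ => ?_
  · simpa [mul_assoc] using hS h⁻¹ (inv_mem hh) _ hg
  · simp only [MulEquiv.toEquiv_eq_coe, MulEquiv.coe_toEquiv, MulAut.conj_apply]
    rw [hA.homogProj_conj_of_mem_center hz ha hu', inverse_units_conj]

theorem homogProj_one_sum_inverse_mul (S : Finset G) (z : A) :
    homogProj 𝒜 1 ((∑ g ∈ S, (homogProj 𝒜 g z)⁻¹ʳ) * z)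
      = ∑ g ∈ S, (homogProj 𝒜 g z)⁻¹ʳ * homogProj 𝒜 g z := by
  conv_lhs => enter [2, 2]; rw [← sum_homogProj 𝒜 z]
  rw [Finset.sum_mul_sum, map_sum]
  refine Finset.sum_congr rfl fun g _ => ?_
  have hproj := homogProj_sum_of_injective 𝒜 (mul_right_injective g⁻¹)
    (fun j _ => hA.mul_mem (hA.inverse_mem (homogProj_mem 𝒜 g z)) (homogProj_mem 𝒜 j z))
    (Finset.mem_univ g)
  rwa [inv_mul_cancel] at hproj

theorem exists_mem_center_homogProj_one_mul_eq_nsmul {z : A} (hz : z ∈ Subalgebra.center k A)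
    (hz0 : z ≠ 0) : ∃ w ∈ Subalgebra.center k A, ∃ n : ℕ,
      n ∣ Nat.card G ∧ homogProj 𝒜 1 (w * z) = n • (1 : A) := by
  classical
  obtain ⟨g₀, hg₀⟩ : ∃ g₀, homogProj 𝒜 g₀ z ≠ 0 := by
    by_contra! h
    exact hz0 (by rw [← sum_homogProj 𝒜 z]; exact Finset.sum_eq_zero fun g _ => h g)
  set O := hA.unitDegrees.conjOrbit g₀
  have hunit : ∀ g ∈ O, IsUnit (homogProj 𝒜 g z) := by
    intro g hg
    obtain ⟨h, ⟨u, hu, hu'⟩, rfl⟩ := Subgroup.mem_conjOrbit_iff.1 hg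
    refine hA.isUnit_of_ne_zero _ _ (homogProj_mem 𝒜 _ z) ?_
    rw [hA.homogProj_conj_of_mem_center hz hu hu']
    simpa using hg₀
  set S := (Set.toFinite O).toFinset
  refine ⟨_, hA.sum_inverse_homogProj_mem_center hz S fun h hh g hg => ?_, S.card, ?_, ?_⟩
  · simpa [S] using Subgroup.conj_mem_conjOrbit hh (by simpa [S] using hg)
  · rw [← Set.ncard_eq_toFinset_card]
    exact Subgroup.ncard_conjOrbit_dvd _ _
  · rw [hA.homogProj_one_sum_inverse_mul,
      Finset.sum_congr rfl fun g hg => inverse_mul_cancel _ (hunit g (by simpa [S] using hg)),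
      Finset.sum_const]

end IsGradedDivisionAlgebra

theorem center_isSymmetric_general {k A G : Type*} [Field k] [Ring A] [Algebra k A] [Group G]
    [Finite G] [DecidableEq G]
    (𝒜 : G → Submodule k A) (hA : IsGradedDivisionAlgebra 𝒜)
    (hchar : ¬ ringChar k ∣ Nat.card G) :
    ∃ lam : Subalgebra.center k A →ₗ[k] k,
      (∀ a b : Subalgebra.center k A, lam (a * b) = lam (b * a)) ∧
      ∀ I : Ideal (Subalgebra.center k A), (∀ x ∈ I, lam x = 0) → I = ⊥ := by
  have := Fintype.ofFinite G
  let _ : DirectSum.Decomposition 𝒜 := hA.internal.chooseDecomposition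
  obtain ⟨F, hF⟩ : ∃ F : Module.Dual k A, (1 : A) ≠ 0 → F 1 ≠ 0 := by
    by_cases h1 : (1 : A) = 0
    · exact ⟨0, fun h => (h h1).elim⟩
    · obtain ⟨F, hF⟩ := Module.Projective.exists_dual_ne_zero k h1
      exact ⟨F, fun _ => hF⟩
  refine ⟨F ∘ₗ DirectSum.homogProj 𝒜 1 ∘ₗ (Subalgebra.center k A).val.toLinearMap,
    fun a b => by rw [mul_comm a b], fun I hI => (Submodule.eq_bot_iff I).2 fun z hzI => ?_⟩
  by_contra hz0
  have hz : (z : A) ≠ 0 := fun h => hz0 (Subtype.ext h)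
  obtain ⟨w, hw, n, hn, hwz⟩ := hA.exists_mem_center_homogProj_one_mul_eq_nsmul z.2 hz
  have hn0 : (n : k) ≠ 0 := fun h => hchar (((ringChar.spec k n).1 h).trans hn)
  have hlam := hI _ (I.mul_mem_left ⟨w, hw⟩ hzI)
  simp only [LinearMap.comp_apply, AlgHom.toLinearMap_apply, Subalgebra.coe_val,
    Subalgebra.coe_mul] at hlam
  rw [hwz, map_nsmul, nsmul_eq_mul] at hlam
  exact mul_ne_zero hn0 (hF fun h => hz (by rw [← mul_one (z : A), h, mul_zero])) hlam

/-- If `A` is a finite dimensional `G`-graded division algebra and `char k ∤ |G|`,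
then the center of `A` is a symmetric algebra: there is a linear functional on it
whose kernel contains no nonzero ideal. -/
theorem center_isSymmetric {k A G : Type*} [Field k] [Ring A] [Algebra k A] [Group G]
    [Finite G] [DecidableEq G] [FiniteDimensional k A]
    (𝒜 : G → Submodule k A) (hA : IsGradedDivisionAlgebra 𝒜)
    (hchar : ¬ ringChar k ∣ Nat.card G) :
    ∃ lam : Subalgebra.center k A →ₗ[k] k,
      (∀ a b : Subalgebra.center k A, lam (a * b) = lam (b * a)) ∧
      ∀ I : Ideal (Subalgebra.center k A), (∀ x ∈ I, lam x = 0) → I = ⊥ :=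
  center_isSymmetric_general 𝒜 hA hchar
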